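/- arXiv:2605.20223 — 2 statements merged into one kernel-verified Lean document; each statement's English description precedes it below -/
import Mathlib

section
/- Eckart–Young (Frobenius norm): Let Σ ∈ R^{m×n} have singular values σ_1 ≥ σ_2 ≥ ... and SVD Σ = Σ_k σ_k u_k v_k^T. Then min over matrices P with rank(P) ≤ r of ||P - Σ||_F^2 equals Σ_{k>r} σ_k^2, achieved by the rank-r truncated SVD. -/
open Matrix Finset

noncomputable section

/-- Squared Frobenius norm of a matrix. -/
def frobSq {m n : ℕ} (M : Matrix (Fin m) (Fin n) ℝ) : ℝ := ∑ i, ∑ j, (M i j) ^ 2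

namespace EY

/-- expansion: squared norm of a combination of orthonormal vectors -/
lemma sq_sum_combo {n p : ℕ} (e : Fin p → Fin n → ℝ)
    (he : ∀ k l, ∑ j, e k j * e l j = if k = l then (1:ℝ) else 0)
    (c : Fin p → ℝ) :
    ∑ j, (∑ k, c k * e k j)^2 = ∑ k, (c k)^2 := by
  have h : ∀ k l, ∑ j, (c k * e k j) * (c l * e l j)
      = c k * c l * (if k = l then (1:ℝ) else 0) := by
    intro k l
    rw [← he k l, Finset.mul_sum]
    exact Finset.sum_congr rfl fun j _ => by ring
  calc ∑ j, (∑ k, c k * e k j)^2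
      = ∑ j, ∑ k, ∑ l, (c k * e k j) * (c l * e l j) := by
        refine Finset.sum_congr rfl fun j _ => ?_
        rw [sq, Finset.sum_mul_sum]
    _ = ∑ k, ∑ l, ∑ j, (c k * e k j) * (c l * e l j) := by
        rw [Finset.sum_comm]
        exact Finset.sum_congr rfl fun k _ => Finset.sum_comm
    _ = ∑ k, ∑ l, c k * c l * (if k = l then (1:ℝ) else 0) := by
        exact Finset.sum_congr rfl fun k _ => Finset.sum_congr rfl fun l _ => h k l
    _ = ∑ k, (c k)^2 := by
        refine Finset.sum_congr rfl fun k _ => ?_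
        rw [Finset.sum_eq_single k]
        · simp [sq]
        · intro l _ hl; simp [(Ne.symm hl : ¬ k = l)]
        · simp

/-- Bessel's inequality, raw sums -/
lemma bessel {n p : ℕ} (e : Fin p → Fin n → ℝ)
    (he : ∀ k l, ∑ j, e k j * e l j = if k = l then (1:ℝ) else 0)
    (x : Fin n → ℝ) :
    ∑ k, (∑ j, x j * e k j)^2 ≤ ∑ j, (x j)^2 := by
  set c : Fin p → ℝ := fun k => ∑ j, x j * e k j with hc
  have h0 : (0:ℝ) ≤ ∑ j, (x j - ∑ k, c k * e k j)^2 :=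
    Finset.sum_nonneg fun _ _ => sq_nonneg _
  have h1 : ∑ j, x j * ∑ k, c k * e k j = ∑ k, (c k)^2 := by
    simp_rw [Finset.mul_sum]
    rw [Finset.sum_comm]
    refine Finset.sum_congr rfl fun k _ => ?_
    have : ∑ j, x j * (c k * e k j) = c k * ∑ j, x j * e k j := by
      rw [Finset.mul_sum]; exact Finset.sum_congr rfl fun j _ => by ring
    rw [this]; rw [show ∑ j, x j * e k j = c k from rfl]; ring
  have h2 : ∑ j, (∑ k, c k * e k j)^2 = ∑ k, (c k)^2 := sq_sum_combo e he c
  have key : ∑ j, (x j - ∑ k, c k * e k j)^2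
      = ∑ j, (x j)^2 - ∑ k, (c k)^2 := by
    have expand : ∀ j, (x j - ∑ k, c k * e k j)^2
        = (x j)^2 - 2 * (x j * ∑ k, c k * e k j) + (∑ k, c k * e k j)^2 :=
      fun j => by ring
    rw [Finset.sum_congr rfl fun j _ => expand j, Finset.sum_add_distrib,
      Finset.sum_sub_distrib, ← Finset.mul_sum, h1, h2]
    ring
  rw [key] at h0
  linarith

lemma card_filter_lt {p r : ℕ} (hrp : r ≤ p) :
    (univ.filter (fun k : Fin p => (k : ℕ) < r)).card = r := by
  have : (univ.filter (fun k : Fin p => (k : ℕ) < r))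
      = Finset.map (Fin.castLEEmb hrp) univ := by
    ext k
    simp only [mem_filter, mem_univ, true_and, Finset.mem_map, Fin.castLEEmb,
      Function.Embedding.coeFn_mk]
    constructor
    · intro h; exact ⟨⟨k, h⟩, by simp [Fin.ext_iff]⟩
    · rintro ⟨j, rfl⟩; simp [j.isLt]
  rw [this]; simp

lemma comb {p r : ℕ} (hr : r < p) (σ : Fin p → ℝ) (hσ0 : ∀ k, 0 ≤ σ k)
    (hmono : ∀ k l : Fin p, k ≤ l → σ l ≤ σ k)
    (t : Fin p → ℝ) (ht0 : ∀ k, 0 ≤ t k) (ht1 : ∀ k, t k ≤ 1)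
    (hts : ∑ k, t k ≤ (r : ℝ)) :
    ∑ k ∈ univ.filter (fun k : Fin p => r ≤ (k : ℕ)), σ k ^ 2
      ≤ ∑ k, σ k ^ 2 * (1 - t k) := by
  set ρ : ℝ := σ ⟨r, hr⟩ ^ 2 with hρ
  have hρ0 : 0 ≤ ρ := sq_nonneg _
  have key : ∑ k, σ k ^ 2 * t k ≤ ∑ k ∈ univ.filter (fun k : Fin p => (k:ℕ) < r), σ k ^ 2 := by
    have h2 : ∑ k, (σ k ^ 2 - ρ) * t k
        ≤ ∑ k ∈ univ.filter (fun k : Fin p => (k:ℕ) < r), (σ k ^ 2 - ρ) := by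
      rw [← Finset.sum_filter_add_sum_filter_not univ (fun k : Fin p => (k:ℕ) < r)
        (fun k => (σ k ^ 2 - ρ) * t k)]
      have hA : ∑ k ∈ univ.filter (fun k : Fin p => (k:ℕ) < r), (σ k ^ 2 - ρ) * t k
          ≤ ∑ k ∈ univ.filter (fun k : Fin p => (k:ℕ) < r), (σ k ^ 2 - ρ) := by
        refine Finset.sum_le_sum fun k hk => ?_
        simp only [mem_filter] at hk
        have hkr : k ≤ (⟨r, hr⟩ : Fin p) := le_of_lt (by exact hk.2)
        have : ρ ≤ σ k ^ 2 := by
          have := hmono k ⟨r, hr⟩ hkr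
          exact pow_le_pow_left₀ (hσ0 _) this 2
        nlinarith [ht0 k, ht1 k]
      have hB : ∑ k ∈ univ.filter (fun k : Fin p => ¬ (k:ℕ) < r), (σ k ^ 2 - ρ) * t k ≤ 0 := by
        refine Finset.sum_nonpos fun k hk => ?_
        simp only [mem_filter, not_lt] at hk
        have hkr : (⟨r, hr⟩ : Fin p) ≤ k := by exact hk.2
        have : σ k ^ 2 ≤ ρ := pow_le_pow_left₀ (hσ0 _) (hmono _ _ hkr) 2
        nlinarith [ht0 k]
      linarith
    have h3 : ∑ k, ρ * t k ≤ ρ * r := by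
      rw [← Finset.mul_sum]
      exact mul_le_mul_of_nonneg_left hts hρ0
    have h4 : ∑ k ∈ univ.filter (fun k : Fin p => (k:ℕ) < r), (σ k ^ 2 - ρ)
        = ∑ k ∈ univ.filter (fun k : Fin p => (k:ℕ) < r), σ k ^ 2 - ρ * r := by
      rw [Finset.sum_sub_distrib, Finset.sum_const, card_filter_lt hr.le]
      ring
    calc ∑ k, σ k ^ 2 * t k = ∑ k, ((σ k ^ 2 - ρ) * t k + ρ * t k) := by
          exact Finset.sum_congr rfl fun k _ => by ring
      _ = ∑ k, (σ k ^ 2 - ρ) * t k + ∑ k, ρ * t k := Finset.sum_add_distrib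
      _ ≤ (∑ k ∈ univ.filter (fun k : Fin p => (k:ℕ) < r), σ k ^ 2 - ρ * r) + ρ * r := by
          rw [← h4]; exact add_le_add h2 h3
      _ = _ := by ring
  have split : ∑ k ∈ univ.filter (fun k : Fin p => (k:ℕ) < r), σ k ^ 2
      + ∑ k ∈ univ.filter (fun k : Fin p => r ≤ (k:ℕ)), σ k ^ 2 = ∑ k, σ k ^ 2 := by
    rw [← Finset.sum_filter_add_sum_filter_not univ (fun k : Fin p => (k:ℕ) < r)
      (fun k => σ k ^ 2)]
    congr 1
    exact Finset.sum_congr (by simp [not_lt]) fun _ _ => rfl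
  have expand : ∑ k, σ k ^ 2 * (1 - t k) = ∑ k, σ k ^ 2 - ∑ k, σ k ^ 2 * t k := by
    rw [← Finset.sum_sub_distrib]
    exact Finset.sum_congr rfl fun k _ => by ring
  linarith

lemma exists_onb_range {m n r : ℕ} (P : Matrix (Fin m) (Fin n) ℝ) (hP : P.rank ≤ r) :
    ∃ (s : ℕ) (w : Fin s → Fin m → ℝ), s ≤ r ∧
      (∀ i i', ∑ j, w i j * w i' j = if i = i' then (1:ℝ) else 0) ∧
      (∀ x : Fin n → ℝ, ∀ j, P.mulVec x j
        = ∑ i, (∑ j', w i j' * P.mulVec x j') * w i j) := by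
  classical
  set E := EuclideanSpace ℝ (Fin m)
  let eqv : (Fin m → ℝ) ≃ₗ[ℝ] E := (WithLp.linearEquiv 2 ℝ (Fin m → ℝ)).symm
  let W : Submodule ℝ E := (LinearMap.range P.mulVecLin).map (eqv : (Fin m → ℝ) →ₗ[ℝ] E)
  have hWrank : Module.finrank ℝ W = P.rank := by
    rw [LinearEquiv.finrank_map_eq]; rfl
  let B := stdOrthonormalBasis ℝ W
  let w : Fin (Module.finrank ℝ W) → Fin m → ℝ :=
    fun i => eqv.symm ((B i : E))
  refine ⟨Module.finrank ℝ W, w, hWrank ▸ hP, ?_, ?_⟩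
  · intro i i'
    have hB := B.orthonormal
    rw [orthonormal_iff_ite] at hB
    have h := hB i i'
    rw [Submodule.coe_inner, PiLp.inner_apply] at h
    simp only [RCLike.inner_apply, starRingEnd_apply, star_trivial] at h
    rw [← h]
    exact Finset.sum_congr rfl fun j _ => mul_comm _ _
  · intro x j
    have hmem : eqv (P.mulVec x) ∈ W := Submodule.mem_map_of_mem ⟨x, rfl⟩
    set z : W := ⟨eqv (P.mulVec x), hmem⟩ with hz
    have hco : ∀ i, B.repr z i = ∑ j', w i j' * P.mulVec x j' := by
      intro i
      rw [B.repr_apply_apply, Submodule.coe_inner, PiLp.inner_apply]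
      simp only [RCLike.inner_apply, starRingEnd_apply, star_trivial]
      exact Finset.sum_congr rfl fun j' _ => mul_comm _ _
    have hcoe : ∑ i, B.repr z i • ((B i : E)) = (z : E) := by
      conv_rhs => rw [← B.sum_repr z]
      rw [Submodule.coe_sum]
      exact Finset.sum_congr rfl fun i _ => rfl
    have h2 := congrArg eqv.symm hcoe
    rw [map_sum] at h2
    simp only [_root_.map_smul] at h2
    have hzz : eqv.symm (z : E) = P.mulVec x := LinearEquiv.symm_apply_apply eqv _
    rw [hzz] at h2
    have h4 := congrFun h2 j
    rw [Finset.sum_apply] at h4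
    rw [← h4]
    refine Finset.sum_congr rfl fun i _ => ?_
    rw [hco i]
    rfl

lemma rank_add_le {m n : ℕ} (A B : Matrix (Fin m) (Fin n) ℝ) :
    (A + B).rank ≤ A.rank + B.rank := by
  have h : LinearMap.range (A + B).mulVecLin
      ≤ LinearMap.range A.mulVecLin ⊔ LinearMap.range B.mulVecLin := by
    rintro x ⟨y, rfl⟩
    rw [Matrix.mulVecLin_apply, Matrix.add_mulVec]
    exact Submodule.add_mem_sup ⟨y, rfl⟩ ⟨y, rfl⟩
  calc (A + B).rank = Module.finrank ℝ (LinearMap.range (A + B).mulVecLin) := rfl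
    _ ≤ Module.finrank ℝ ↥(LinearMap.range A.mulVecLin ⊔ LinearMap.range B.mulVecLin) :=
        Submodule.finrank_mono h
    _ ≤ _ := Submodule.finrank_add_le_finrank_add_finrank _ _

lemma rank_one_term {m n : ℕ} (c : ℝ) (w : Fin m → ℝ) (v : Fin n → ℝ) :
    (c • vecMulVec w v).rank ≤ 1 := by
  have h : c • vecMulVec w v = vecMulVec (c • w) v := by
    ext i j; simp [vecMulVec_apply]; ring
  rw [h, vecMulVec_eq Unit]
  exact (Matrix.rank_mul_le_left _ _).trans
    ((Matrix.rank_le_card_width _).trans (by simp))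

lemma rank_sum_le {m n q : ℕ} (S : Finset (Fin q)) (f : Fin q → Matrix (Fin m) (Fin n) ℝ)
    (hf : ∀ k, (f k).rank ≤ 1) : (∑ k ∈ S, f k).rank ≤ S.card := by
  classical
  induction S using Finset.cons_induction with
  | empty => simp [Matrix.rank_zero]
  | cons a S ha ih =>
    rw [Finset.sum_cons, Finset.card_cons]
    calc (f a + ∑ k ∈ S, f k).rank ≤ (f a).rank + (∑ k ∈ S, f k).rank := rank_add_le _ _
      _ ≤ 1 + S.card := add_le_add (hf a) ih
      _ = S.card + 1 := by ring

lemma key_lower {m s : ℕ} (σk : ℝ) (uk : Fin m → ℝ) (huk : ∑ i, uk i * uk i = 1)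
    (w : Fin s → Fin m → ℝ)
    (hw : ∀ i i', ∑ j, w i j * w i' j = if i = i' then (1:ℝ) else 0)
    (y : Fin m → ℝ)
    (hy : ∀ i, y i = ∑ l, (∑ i', w l i' * y i') * w l i) :
    σk ^ 2 * (1 - ∑ l, (∑ i, w l i * uk i) ^ 2) ≤ ∑ i, (y i - σk * uk i) ^ 2 := by
  set c : Fin s → ℝ := fun l => ∑ i', w l i' * y i' with hc
  set a : Fin s → ℝ := fun l => ∑ i, w l i * uk i with ha
  have h1 : ∑ i, (y i) ^ 2 = ∑ l, (c l) ^ 2 := by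
    calc ∑ i, (y i) ^ 2 = ∑ i, (∑ l, c l * w l i) ^ 2 :=
          Finset.sum_congr rfl fun i _ => by rw [← hy i]
      _ = ∑ l, (c l) ^ 2 := sq_sum_combo w hw c
  have h2 : ∑ i, y i * uk i = ∑ l, c l * a l := by
    calc ∑ i, y i * uk i = ∑ i, (∑ l, c l * w l i) * uk i :=
          Finset.sum_congr rfl fun i _ => by rw [← hy i]
      _ = ∑ i, ∑ l, c l * w l i * uk i :=
          Finset.sum_congr rfl fun i _ => Finset.sum_mul _ _ _
      _ = ∑ l, ∑ i, c l * w l i * uk i := Finset.sum_comm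
      _ = ∑ l, c l * a l := by
          refine Finset.sum_congr rfl fun l _ => ?_
          rw [ha]; simp only [Finset.mul_sum]
          exact Finset.sum_congr rfl fun i _ => by ring
  have h3 : ∑ i, (y i - σk * uk i) ^ 2
      = ∑ i, (y i) ^ 2 - 2 * σk * ∑ i, y i * uk i + σk ^ 2 * ∑ i, uk i * uk i := by
    have e : ∀ i : Fin m, (y i - σk * uk i) ^ 2
        = y i ^ 2 - 2 * σk * (y i * uk i) + σk ^ 2 * (uk i * uk i) := fun i => by ring
    rw [Finset.sum_congr rfl fun i _ => e i, Finset.sum_add_distrib, Finset.sum_sub_distrib,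
      ← Finset.mul_sum, ← Finset.mul_sum]
  have h0 : (0:ℝ) ≤ ∑ l, (c l - σk * a l) ^ 2 := Finset.sum_nonneg fun _ _ => sq_nonneg _
  have h4 : ∑ l, (c l - σk * a l) ^ 2
      = ∑ l, (c l) ^ 2 - 2 * σk * ∑ l, c l * a l + σk ^ 2 * ∑ l, (a l) ^ 2 := by
    have e : ∀ l : Fin s, (c l - σk * a l) ^ 2
        = c l ^ 2 - 2 * σk * (c l * a l) + σk ^ 2 * (a l) ^ 2 := fun l => by ring
    rw [Finset.sum_congr rfl fun l _ => e l, Finset.sum_add_distrib, Finset.sum_sub_distrib,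
      ← Finset.mul_sum, ← Finset.mul_sum]
  have hgoal : ∑ l, (∑ i, w l i * uk i) ^ 2 = ∑ l, (a l) ^ 2 :=
    Finset.sum_congr rfl fun l _ => rfl
  rw [hgoal, h3, h1, h2, huk]
  rw [h4] at h0
  linarith

/-- frobSq of a partial sum of the SVD. -/
lemma frob_sum {m n p : ℕ} (σ : Fin p → ℝ) (u : Fin p → Fin m → ℝ) (v : Fin p → Fin n → ℝ)
    (hu : ∀ k l : Fin p, ∑ i, u k i * u l i = if k = l then (1 : ℝ) else 0)
    (hv : ∀ k l : Fin p, ∑ j, v k j * v l j = if k = l then (1 : ℝ) else 0)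
    (S : Finset (Fin p)) :
    frobSq (∑ k ∈ S, σ k • vecMulVec (u k) (v k)) = ∑ k ∈ S, σ k ^ 2 := by
  have entry : ∀ i j, (∑ k ∈ S, σ k • vecMulVec (u k) (v k)) i j
      = ∑ k ∈ S, σ k * (u k i * v k j) := by
    intro i j; simp [Matrix.sum_apply, vecMulVec_apply]
  unfold frobSq
  calc ∑ i, ∑ j, ((∑ k ∈ S, σ k • vecMulVec (u k) (v k)) i j) ^ 2
      = ∑ i, ∑ j, ∑ k ∈ S, ∑ l ∈ S,
          (σ k * (u k i * v k j)) * (σ l * (u l i * v l j)) := by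
        refine Finset.sum_congr rfl fun i _ => Finset.sum_congr rfl fun j _ => ?_
        rw [entry, sq, Finset.sum_mul_sum]
    _ = ∑ k ∈ S, ∑ l ∈ S, ∑ i, ∑ j,
          (σ k * (u k i * v k j)) * (σ l * (u l i * v l j)) := by
        rw [Finset.sum_congr rfl fun i (_ : i ∈ univ) => Finset.sum_comm]
        rw [Finset.sum_comm]
        refine Finset.sum_congr rfl fun k _ => ?_
        rw [Finset.sum_congr rfl fun i (_ : i ∈ univ) => Finset.sum_comm]
        exact Finset.sum_comm
    _ = ∑ k ∈ S, ∑ l ∈ S,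
          σ k * σ l * ((∑ i, u k i * u l i) * (∑ j, v k j * v l j)) := by
        refine Finset.sum_congr rfl fun k _ => Finset.sum_congr rfl fun l _ => ?_
        calc ∑ i, ∑ j, (σ k * (u k i * v k j)) * (σ l * (u l i * v l j))
            = ∑ i, (σ k * σ l * (u k i * u l i)) * ∑ j, (v k j * v l j) := by
              refine Finset.sum_congr rfl fun i _ => ?_
              rw [Finset.mul_sum]
              exact Finset.sum_congr rfl fun j _ => by ring
          _ = _ := by rw [← Finset.sum_mul, ← Finset.mul_sum, mul_assoc]
    _ = ∑ k ∈ S, σ k ^ 2 := by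
        refine Finset.sum_congr rfl fun k hk => ?_
        rw [Finset.sum_eq_single_of_mem k hk]
        · rw [hu k k, hv k k]; simp [sq]
        · intro l hl hlk
          rw [hu k l, if_neg (Ne.symm hlk)]; ring

end EY

/-- Eckart–Young (Frobenius norm): if `Sig = ∑ k, σ k • u_k v_kᵀ` is an SVD of `Sig`
(with orthonormal `u`, `v` and nonincreasing nonnegative `σ`), then the minimum of
`‖P - Sig‖_F²` over matrices of rank at most `r` equals `∑_{k ≥ r} σ_k²`, achieved by
the rank-`r` truncated SVD. -/
theorem eckart_young_frobenius {m n : ℕ} (p : ℕ) (hp : p = min m n) (r : ℕ) (hr : r < min m n)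
    (σ : Fin p → ℝ) (u : Fin p → Fin m → ℝ) (v : Fin p → Fin n → ℝ)
    (hσ0 : ∀ k, 0 ≤ σ k)
    (hσmono : ∀ k l : Fin p, k ≤ l → σ l ≤ σ k)
    (hu : ∀ k l : Fin p, ∑ i, u k i * u l i = if k = l then (1 : ℝ) else 0)
    (hv : ∀ k l : Fin p, ∑ j, v k j * v l j = if k = l then (1 : ℝ) else 0)
    (Sig : Matrix (Fin m) (Fin n) ℝ)
    (hSVD : Sig = ∑ k : Fin p, σ k • vecMulVec (u k) (v k)) :
    (∀ P : Matrix (Fin m) (Fin n) ℝ, P.rank ≤ r →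
        ∑ k ∈ univ.filter (fun k : Fin p => r ≤ (k : ℕ)), (σ k) ^ 2 ≤ frobSq (P - Sig)) ∧
      frobSq ((∑ k ∈ univ.filter (fun k : Fin p => (k : ℕ) < r),
            σ k • vecMulVec (u k) (v k)) - Sig)
        = ∑ k ∈ univ.filter (fun k : Fin p => r ≤ (k : ℕ)), (σ k) ^ 2 ∧
      (∑ k ∈ univ.filter (fun k : Fin p => (k : ℕ) < r),
          σ k • vecMulVec (u k) (v k)).rank ≤ r := by
  have hrp : r < p := by rw [hp]; exact hr
  -- Part 3: rank bound
  have part3 : (∑ k ∈ univ.filter (fun k : Fin p => (k : ℕ) < r),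
      σ k • vecMulVec (u k) (v k)).rank ≤ r := by
    calc (∑ k ∈ univ.filter (fun k : Fin p => (k : ℕ) < r),
          σ k • vecMulVec (u k) (v k)).rank
        ≤ (univ.filter (fun k : Fin p => (k : ℕ) < r)).card :=
          EY.rank_sum_le _ _ (fun k => EY.rank_one_term _ _ _)
      _ = r := EY.card_filter_lt hrp.le
  -- Part 2: value at truncated SVD
  have hfilter : univ.filter (fun k : Fin p => ¬ (k : ℕ) < r)
      = univ.filter (fun k : Fin p => r ≤ (k : ℕ)) := by
    ext k; simp [not_lt]
  have part2 : frobSq ((∑ k ∈ univ.filter (fun k : Fin p => (k : ℕ) < r),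
        σ k • vecMulVec (u k) (v k)) - Sig)
      = ∑ k ∈ univ.filter (fun k : Fin p => r ≤ (k : ℕ)), (σ k) ^ 2 := by
    have hsplit : Sig = (∑ k ∈ univ.filter (fun k : Fin p => (k : ℕ) < r),
          σ k • vecMulVec (u k) (v k))
        + ∑ k ∈ univ.filter (fun k : Fin p => r ≤ (k : ℕ)), σ k • vecMulVec (u k) (v k) := by
      rw [hSVD, ← hfilter, Finset.sum_filter_add_sum_filter_not]
    have hneg : (∑ k ∈ univ.filter (fun k : Fin p => (k : ℕ) < r),
          σ k • vecMulVec (u k) (v k)) - Sig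
        = -(∑ k ∈ univ.filter (fun k : Fin p => r ≤ (k : ℕ)), σ k • vecMulVec (u k) (v k)) := by
      rw [hsplit]; abel
    rw [hneg]
    have hfneg : frobSq (-(∑ k ∈ univ.filter (fun k : Fin p => r ≤ (k : ℕ)),
          σ k • vecMulVec (u k) (v k)))
        = frobSq (∑ k ∈ univ.filter (fun k : Fin p => r ≤ (k : ℕ)),
          σ k • vecMulVec (u k) (v k)) := by
      unfold frobSq
      exact Finset.sum_congr rfl fun i _ => Finset.sum_congr rfl fun j _ => by
        rw [Matrix.neg_apply]; ring
    rw [hfneg, EY.frob_sum σ u v hu hv]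
  refine ⟨?_, part2, part3⟩
  -- Part 1: lower bound
  intro P hPr
  obtain ⟨s, w, hsr, hw, hyexp⟩ := EY.exists_onb_range P hPr
  have ht0 : ∀ k : Fin p, (0:ℝ) ≤ ∑ l, (∑ i, w l i * u k i) ^ 2 :=
    fun k => Finset.sum_nonneg fun _ _ => sq_nonneg _
  have ht1 : ∀ k : Fin p, ∑ l, (∑ i, w l i * u k i) ^ 2 ≤ 1 := by
    intro k
    have hconv : ∑ l, (∑ i, w l i * u k i) ^ 2 = ∑ l, (∑ i, u k i * w l i) ^ 2 := by
      refine Finset.sum_congr rfl fun l _ => ?_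
      congr 1; exact Finset.sum_congr rfl fun i _ => mul_comm _ _
    have h1 : ∑ i, (u k i) ^ 2 = 1 := by
      have h := hu k k; rw [if_pos rfl] at h
      rw [← h]; exact Finset.sum_congr rfl fun i _ => pow_two _
    calc ∑ l, (∑ i, w l i * u k i) ^ 2 = ∑ l, (∑ i, u k i * w l i) ^ 2 := hconv
      _ ≤ ∑ i, (u k i) ^ 2 := EY.bessel w hw (u k)
      _ = 1 := h1
  have hts : ∑ k : Fin p, ∑ l, (∑ i, w l i * u k i) ^ 2 ≤ (r : ℝ) := by
    have hswap : ∑ k : Fin p, ∑ l, (∑ i, w l i * u k i) ^ 2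
        = ∑ l, ∑ k : Fin p, (∑ i, w l i * u k i) ^ 2 := Finset.sum_comm
    have hl1 : ∀ l : Fin s, ∑ k : Fin p, (∑ i, w l i * u k i) ^ 2 ≤ 1 := by
      intro l
      have h1 : ∑ i, (w l i) ^ 2 = 1 := by
        have h := hw l l; rw [if_pos rfl] at h
        rw [← h]; exact Finset.sum_congr rfl fun i _ => pow_two _
      exact (EY.bessel u hu (w l)).trans_eq h1
    calc ∑ k : Fin p, ∑ l, (∑ i, w l i * u k i) ^ 2
        = ∑ l, ∑ k : Fin p, (∑ i, w l i * u k i) ^ 2 := hswap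
      _ ≤ ∑ _l : Fin s, (1:ℝ) := Finset.sum_le_sum fun l _ => hl1 l
      _ = s := by simp
      _ ≤ r := by exact_mod_cast hsr
  have step1 : ∀ k : Fin p,
      σ k ^ 2 * (1 - ∑ l, (∑ i, w l i * u k i) ^ 2)
        ≤ ∑ i, (P.mulVec (v k) i - σ k * u k i) ^ 2 := by
    intro k
    have huk : ∑ i, u k i * u k i = 1 := by
      have h := hu k k; rwa [if_pos rfl] at h
    exact EY.key_lower (σ k) (u k) huk w hw (P.mulVec (v k)) (fun i => hyexp (v k) i)
  have hSigmul : ∀ k : Fin p, ∀ i, Sig.mulVec (v k) i = σ k * u k i := by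
    intro k i
    have hentry : ∀ j, Sig i j = ∑ l : Fin p, σ l * (u l i * v l j) := by
      intro j; rw [hSVD]; simp [Matrix.sum_apply, vecMulVec_apply]
    calc Sig.mulVec (v k) i = ∑ j, Sig i j * v k j := rfl
      _ = ∑ j, ∑ l : Fin p, σ l * (u l i * v l j) * v k j := by
          refine Finset.sum_congr rfl fun j _ => ?_
          rw [hentry j, Finset.sum_mul]
      _ = ∑ l : Fin p, ∑ j, σ l * (u l i * v l j) * v k j := Finset.sum_comm
      _ = ∑ l : Fin p, σ l * u l i * ∑ j, v l j * v k j := by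
          refine Finset.sum_congr rfl fun l _ => ?_
          rw [Finset.mul_sum]; exact Finset.sum_congr rfl fun j _ => by ring
      _ = σ k * u k i := by
          rw [Finset.sum_eq_single k]
          · rw [hv k k, if_pos rfl]; ring
          · intro l _ hlk; rw [hv l k, if_neg hlk]; ring
          · simp
  have step2 : ∑ k : Fin p, ∑ i, (P.mulVec (v k) i - σ k * u k i) ^ 2
      ≤ frobSq (P - Sig) := by
    unfold frobSq
    rw [Finset.sum_comm]
    refine Finset.sum_le_sum fun i _ => ?_
    have hb := EY.bessel v hv ((P - Sig) i)
    refine le_trans (le_of_eq ?_) hb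
    refine Finset.sum_congr rfl fun k _ => ?_
    congr 1
    have hmv : ∑ j, (P - Sig) i j * v k j = (P - Sig).mulVec (v k) i := rfl
    rw [hmv, Matrix.sub_mulVec]
    simp [hSigmul k i]
  calc ∑ k ∈ univ.filter (fun k : Fin p => r ≤ (k : ℕ)), (σ k) ^ 2
      ≤ ∑ k : Fin p, σ k ^ 2 * (1 - ∑ l, (∑ i, w l i * u k i) ^ 2) :=
        EY.comb hrp σ hσ0 hσmono _ ht0 ht1 hts
    _ ≤ ∑ k : Fin p, ∑ i, (P.mulVec (v k) i - σ k * u k i) ^ 2 :=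
        Finset.sum_le_sum fun k _ => step1 k
    _ ≤ frobSq (P - Sig) := step2
end
end

section
/- At the optimum A = I and C = -D of the cross-exogenous reconstruction objective, the loss reduces exactly to E[||u - B D ũ||^2], i.e., E[||o' - (Ao + B(Cõ + Dõ'))||^2] ≥ E[||u - BDũ||^2] for all (A, B, C, D), with equality at A = I, C = -D. -/
open MeasureTheory Matrix

noncomputable section

/-- Squared Euclidean norm of a vector. -/
def sqNorm {d : ℕ} (v : Fin d → ℝ) : ℝ := ∑ i, (v i) ^ 2

section Aux

variable {Ω : Type*} [MeasurableSpace Ω] {μ : Measure Ω}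

private lemma int_mul {f g : Ω → ℝ} (hf : MemLp f 2 μ) (hg : MemLp g 2 μ) :
    Integrable (fun ω => f ω * g ω) μ := by
  rw [← memLp_one_iff_integrable]
  have h : (1 : ENNReal) / 1 = 1 / 2 + 1 / 2 := by
    rw [ENNReal.add_halves]; simp
  simpa [smul_eq_mul, Pi.mul_def] using hg.smul (φ := f) (r := 1) hf

private lemma memLp_lincomb {n : ℕ} (a : Fin n → ℝ) {x : Ω → Fin n → ℝ}
    (hx : ∀ j, MemLp (fun ω => x ω j) 2 μ) :
    MemLp (fun ω => ∑ j, a j * x ω j) 2 μ := by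
  have h := memLp_finset_sum' (μ := μ) Finset.univ
    (f := fun j (ω : Ω) => a j * x ω j) (fun j _ => (hx j).const_mul (a j))
  convert h using 1
  funext ω
  simp

private lemma integral_lincomb_mul {n : ℕ} (a : Fin n → ℝ) {x : Ω → Fin n → ℝ} {f : Ω → ℝ}
    (hx : ∀ j, MemLp (fun ω => x ω j) 2 μ) (hf : MemLp f 2 μ)
    (h0 : ∀ j, ∫ ω, x ω j * f ω ∂μ = 0) :
    ∫ ω, (∑ j, a j * x ω j) * f ω ∂μ = 0 := by
  have : ∀ ω, (∑ j, a j * x ω j) * f ω = ∑ j, a j * (x ω j * f ω) := by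
    intro ω; rw [Finset.sum_mul]; exact Finset.sum_congr rfl fun j _ => by ring
  calc ∫ ω, (∑ j, a j * x ω j) * f ω ∂μ
      = ∫ ω, ∑ j, a j * (x ω j * f ω) ∂μ := by exact integral_congr_ae (Filter.Eventually.of_forall this)
    _ = ∑ j, ∫ ω, a j * (x ω j * f ω) ∂μ := by
        exact integral_finset_sum _ fun j _ => (int_mul (hx j) hf).const_mul _
    _ = 0 := by
        refine Finset.sum_eq_zero fun j _ => ?_
        rw [integral_const_mul, h0 j, mul_zero]

private lemma integral_mul_lincomb {n : ℕ} (a : Fin n → ℝ) {x : Ω → Fin n → ℝ} {f : Ω → ℝ}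
    (hx : ∀ j, MemLp (fun ω => x ω j) 2 μ) (hf : MemLp f 2 μ)
    (h0 : ∀ j, ∫ ω, f ω * x ω j ∂μ = 0) :
    ∫ ω, f ω * (∑ j, a j * x ω j) ∂μ = 0 := by
  have := integral_lincomb_mul a hx hf (fun j => by
    rw [← h0 j]; exact integral_congr_ae (Filter.Eventually.of_forall fun ω => mul_comm _ _))
  rw [← this]
  exact integral_congr_ae (Filter.Eventually.of_forall fun ω => mul_comm _ _)

private lemma integral_sub_mul_sub {f g f' g' : Ω → ℝ}
    (hf : MemLp f 2 μ) (hg : MemLp g 2 μ) (hf' : MemLp f' 2 μ) (hg' : MemLp g' 2 μ)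
    (h1 : ∫ ω, f ω * f' ω ∂μ = 0) (h2 : ∫ ω, f ω * g' ω ∂μ = 0)
    (h3 : ∫ ω, g ω * f' ω ∂μ = 0) (h4 : ∫ ω, g ω * g' ω ∂μ = 0) :
    ∫ ω, (f ω - g ω) * (f' ω - g' ω) ∂μ = 0 := by
  have i1 : Integrable (fun ω => f ω * f' ω) μ := int_mul hf hf'
  have i2 : Integrable (fun ω => f ω * g' ω) μ := int_mul hf hg'
  have i3 : Integrable (fun ω => g ω * f' ω) μ := int_mul hg hf'
  have i4 : Integrable (fun ω => g ω * g' ω) μ := int_mul hg hg'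
  have i12 : Integrable (fun ω => f ω * f' ω - f ω * g' ω) μ := i1.sub i2
  have i34 : Integrable (fun ω => g ω * f' ω - g ω * g' ω) μ := i3.sub i4
  calc ∫ ω, (f ω - g ω) * (f' ω - g' ω) ∂μ
      = ∫ ω, ((f ω * f' ω - f ω * g' ω) - (g ω * f' ω - g ω * g' ω)) ∂μ :=
        integral_congr_ae (Filter.Eventually.of_forall fun ω => by ring)
    _ = (∫ ω, f ω * f' ω ∂μ - ∫ ω, f ω * g' ω ∂μ)
          - (∫ ω, g ω * f' ω ∂μ - ∫ ω, g ω * g' ω ∂μ) := by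
        rw [integral_sub i12 i34, integral_sub i1 i2, integral_sub i3 i4]
    _ = 0 := by rw [h1, h2, h3, h4]; ring

private lemma integral_sqNorm_add {d : ℕ} {v w : Ω → Fin d → ℝ}
    (hv : ∀ i, MemLp (fun ω => v ω i) 2 μ) (hw : ∀ i, MemLp (fun ω => w ω i) 2 μ)
    (horth : ∀ i, ∫ ω, v ω i * w ω i ∂μ = 0) :
    ∫ ω, sqNorm (v ω + w ω) ∂μ = ∫ ω, sqNorm (v ω) ∂μ + ∫ ω, sqNorm (w ω) ∂μ := by
  have hpt : ∀ ω, sqNorm (v ω + w ω)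
      = ∑ i, ((v ω i) ^ 2 + 2 * (v ω i * w ω i) + (w ω i) ^ 2) := by
    intro ω
    exact Finset.sum_congr rfl fun i _ => by simp [Pi.add_apply]; ring
  have hia : ∀ i : Fin d,
      Integrable (fun ω => (v ω i) ^ 2 + 2 * (v ω i * w ω i)) μ := fun i =>
    (hv i).integrable_sq.add ((int_mul (hv i) (hw i)).const_mul 2)
  have hint : ∀ i : Fin d, Integrable
      (fun ω => (v ω i) ^ 2 + 2 * (v ω i * w ω i) + (w ω i) ^ 2) μ := fun i =>
    (hia i).add (hw i).integrable_sq
  calc ∫ ω, sqNorm (v ω + w ω) ∂μ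
      = ∫ ω, ∑ i, ((v ω i) ^ 2 + 2 * (v ω i * w ω i) + (w ω i) ^ 2) ∂μ :=
        integral_congr_ae (Filter.Eventually.of_forall hpt)
    _ = ∑ i, ∫ ω, ((v ω i) ^ 2 + 2 * (v ω i * w ω i) + (w ω i) ^ 2) ∂μ :=
        integral_finset_sum _ fun i _ => hint i
    _ = ∑ i, (∫ ω, (v ω i) ^ 2 ∂μ + ∫ ω, (w ω i) ^ 2 ∂μ) := by
        refine Finset.sum_congr rfl fun i _ => ?_
        have hcm : Integrable (fun ω => 2 * (v ω i * w ω i)) μ :=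
          (int_mul (hv i) (hw i)).const_mul 2
        rw [integral_add (hia i) (hw i).integrable_sq,
          integral_add (hv i).integrable_sq hcm,
          integral_const_mul, horth i]
        ring
    _ = (∑ i, ∫ ω, (v ω i) ^ 2 ∂μ) + ∑ i, ∫ ω, (w ω i) ^ 2 ∂μ := Finset.sum_add_distrib
    _ = ∫ ω, sqNorm (v ω) ∂μ + ∫ ω, sqNorm (w ω) ∂μ := by
        rw [← integral_finset_sum _ fun i _ => (hv i).integrable_sq,
          ← integral_finset_sum _ fun i _ => (hw i).integrable_sq]
        rfl

end Aux

/-- The cross-exogenous reconstruction loss is lower-bounded by `E[‖u - B D ũ‖²]` for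
all `(A, B, C, D)`, with equality at `A = I` and `C = -D`. -/
theorem cross_exo_recon_optimum
    {Ω : Type*} [MeasurableSpace Ω] (μ : Measure Ω) [IsProbabilityMeasure μ]
    {d k : ℕ} (o ot u ut : Ω → Fin d → ℝ)
    (ho2 : ∀ i, MemLp (fun ω => o ω i) 2 μ)
    (hot2 : ∀ i, MemLp (fun ω => ot ω i) 2 μ)
    (hu2 : ∀ i, MemLp (fun ω => u ω i) 2 μ)
    (hut2 : ∀ i, MemLp (fun ω => ut ω i) 2 μ)
    (hou : ∀ i j, ∫ ω, o ω i * u ω j ∂μ = 0)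
    (hout : ∀ i j, ∫ ω, o ω i * ut ω j ∂μ = 0)
    (hotu : ∀ i j, ∫ ω, ot ω i * u ω j ∂μ = 0)
    (hotut : ∀ i j, ∫ ω, ot ω i * ut ω j ∂μ = 0) :
    (∀ (A : Matrix (Fin d) (Fin d) ℝ) (B : Matrix (Fin d) (Fin k) ℝ)
        (C D : Matrix (Fin k) (Fin d) ℝ),
      ∫ ω, sqNorm (u ω - (B * D).mulVec (ut ω)) ∂μ
        ≤ ∫ ω, sqNorm ((o ω + u ω)
            - (A.mulVec (o ω) + B.mulVec (C.mulVec (ot ω) + D.mulVec (ot ω + ut ω)))) ∂μ) ∧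
    (∀ (B : Matrix (Fin d) (Fin k) ℝ) (D : Matrix (Fin k) (Fin d) ℝ),
      ∫ ω, sqNorm ((o ω + u ω)
          - ((1 : Matrix (Fin d) (Fin d) ℝ).mulVec (o ω)
            + B.mulVec ((-D).mulVec (ot ω) + D.mulVec (ot ω + ut ω)))) ∂μ
        = ∫ ω, sqNorm (u ω - (B * D).mulVec (ut ω)) ∂μ) := by
  constructor
  · intro A B C D
    set v : Ω → Fin d → ℝ :=
      fun ω => (1 - A).mulVec (o ω) - (B * (C + D)).mulVec (ot ω) with hv_def
    set w : Ω → Fin d → ℝ := fun ω => u ω - (B * D).mulVec (ut ω) with hw_def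
    have hvLp : ∀ i, MemLp (fun ω => v ω i) 2 μ := by
      intro i
      simp only [hv_def, Pi.sub_apply, Matrix.mulVec, dotProduct]
      exact (memLp_lincomb _ ho2).sub (memLp_lincomb _ hot2)
    have hwLp : ∀ i, MemLp (fun ω => w ω i) 2 μ := by
      intro i
      simp only [hw_def, Pi.sub_apply, Matrix.mulVec, dotProduct]
      exact (hu2 i).sub (memLp_lincomb _ hut2)
    have horth : ∀ i, ∫ ω, v ω i * w ω i ∂μ = 0 := by
      intro i
      simp only [hv_def, hw_def, Pi.sub_apply, Matrix.mulVec, dotProduct]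
      refine integral_sub_mul_sub (memLp_lincomb _ ho2) (memLp_lincomb _ hot2)
        (hu2 i) (memLp_lincomb _ hut2) ?_ ?_ ?_ ?_
      · exact integral_lincomb_mul _ ho2 (hu2 i) fun j => hou j i
      · exact integral_lincomb_mul _ ho2 (memLp_lincomb _ hut2)
          fun j => integral_mul_lincomb _ hut2 (ho2 j) fun m => hout j m
      · exact integral_lincomb_mul _ hot2 (hu2 i) fun j => hotu j i
      · exact integral_lincomb_mul _ hot2 (memLp_lincomb _ hut2)
          fun j => integral_mul_lincomb _ hut2 (hot2 j) fun m => hotut j m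
    have hpt : ∀ ω, (o ω + u ω)
        - (A.mulVec (o ω) + B.mulVec (C.mulVec (ot ω) + D.mulVec (ot ω + ut ω)))
        = v ω + w ω := by
      intro ω
      funext i
      simp only [hv_def, hw_def, Pi.add_apply, Pi.sub_apply, Matrix.sub_mulVec,
        Matrix.add_mulVec, Matrix.mulVec_add, Matrix.one_mulVec, Matrix.mul_add,
        ← Matrix.mulVec_mulVec]
      ring
    have hkey : ∫ ω, sqNorm ((o ω + u ω)
        - (A.mulVec (o ω) + B.mulVec (C.mulVec (ot ω) + D.mulVec (ot ω + ut ω)))) ∂μ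
        = ∫ ω, sqNorm (v ω) ∂μ + ∫ ω, sqNorm (w ω) ∂μ := by
      rw [← integral_sqNorm_add hvLp hwLp horth]
      refine integral_congr_ae (Filter.Eventually.of_forall fun ω => ?_)
      beta_reduce
      rw [hpt ω]
    rw [hkey]
    have hnn : 0 ≤ ∫ ω, sqNorm (v ω) ∂μ :=
      integral_nonneg fun ω => Finset.sum_nonneg fun i _ => sq_nonneg _
    have : (∫ ω, sqNorm (u ω - (B * D).mulVec (ut ω)) ∂μ) = ∫ ω, sqNorm (w ω) ∂μ := rfl
    linarith
  · intro B D
    refine integral_congr_ae (Filter.Eventually.of_forall fun ω => ?_)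
    beta_reduce
    congr 1
    funext i
    simp only [Pi.add_apply, Pi.sub_apply, Matrix.add_mulVec, Matrix.mulVec_add,
      Matrix.one_mulVec, Matrix.neg_mulVec, Matrix.mulVec_neg, ← Matrix.mulVec_mulVec, Pi.neg_apply]
    ring
end
end
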